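/- arXiv:math-ph/0610019 — 3 statements merged into one kernel-verified Lean document; each statement's English description precedes it below -/
import Mathlib

section
/- Let H be a complex Hilbert space, N and M positive integers, and (π_k)_{k=1,...,N}, (τ_j)_{j=1,...,M} bounded operators on H with ∑_k π_k π_k* = Id and ∑_j τ_j τ_j* = Id. Let U : H → H be a bounded operator, and define T : H^N → H^M by the operator matrix T_{jk} = τ_j* ∘ U ∘ π_k. Then the operator norm of T from the Hilbert space H^N (with the direct-sum norm) to H^M equals the operator norm of U on H. -/
/-!
The analysis operator `A_σ x = (σₖ* x)ₖ` of a quantum partition of unity `(σₖ)` is an isometry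
`H → H^N`, and its adjoint, the synthesis operator `S_σ Ψ = ∑ₖ σₖ Ψₖ`, is a contraction and a
left inverse of it. The operator matrix is `T = A_τ ∘ U ∘ S_π`, so `‖T‖ ≤ ‖U‖`, and conversely
`U = S_τ ∘ T ∘ A_π`, so `‖U‖ ≤ ‖T‖`.
-/

open ContinuousLinearMap

section QuantumPartitionOfUnity

variable {𝕜 E ι : Type*} [RCLike 𝕜] [NormedAddCommGroup E] [InnerProductSpace 𝕜 E]
  (σ : ι → E →L[𝕜] E)

noncomputable def synthesisOp [Fintype ι] : PiLp 2 (fun _ : ι => E) →L[𝕜] E :=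
  ∑ k, σ k ∘L PiLp.proj 2 (fun _ : ι => E) k

lemma synthesisOp_apply [Fintype ι] (Ψ : PiLp 2 (fun _ : ι => E)) :
    synthesisOp σ Ψ = ∑ k, σ k (Ψ k) := by
  simp [synthesisOp]

variable [CompleteSpace E]

def IsQuantumPartitionOfUnity [Fintype ι] : Prop :=
  ∑ k, σ k ∘L (σ k).adjoint = 1

noncomputable def analysisOp : E →L[𝕜] PiLp 2 (fun _ : ι => E) :=
  (PiLp.continuousLinearEquiv 2 𝕜 (fun _ : ι => E)).symm.toContinuousLinearMap ∘L
    ContinuousLinearMap.pi fun k => (σ k).adjoint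

@[simp]
lemma analysisOp_apply (x : E) (k : ι) : analysisOp σ x k = (σ k).adjoint x := rfl

variable [Fintype ι]

lemma inner_synthesisOp_left (Ψ : PiLp 2 (fun _ : ι => E)) (x : E) :
    inner 𝕜 (synthesisOp σ Ψ) x = inner 𝕜 Ψ (analysisOp σ x) := by
  simp [synthesisOp_apply, sum_inner, PiLp.inner_apply, adjoint_inner_right]

variable {σ}

namespace IsQuantumPartitionOfUnity

lemma synthesisOp_analysisOp (hσ : IsQuantumPartitionOfUnity σ) (x : E) :
    synthesisOp σ (analysisOp σ x) = x := by
  simpa [synthesisOp_apply] using congr($hσ x)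

lemma norm_analysisOp_apply (hσ : IsQuantumPartitionOfUnity σ) (x : E) :
    ‖analysisOp σ x‖ = ‖x‖ := by
  have h : ‖analysisOp σ x‖ ^ 2 = ‖x‖ ^ 2 := by
    rw [← inner_self_eq_norm_sq (𝕜 := 𝕜), ← inner_self_eq_norm_sq (𝕜 := 𝕜),
      ← inner_synthesisOp_left, hσ.synthesisOp_analysisOp]
  exact (pow_left_inj₀ (norm_nonneg _) (norm_nonneg _) two_ne_zero).1 h

lemma norm_synthesisOp_apply_le (hσ : IsQuantumPartitionOfUnity σ)
    (Ψ : PiLp 2 (fun _ : ι => E)) : ‖synthesisOp σ Ψ‖ ≤ ‖Ψ‖ := by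
  set v := synthesisOp σ Ψ
  have h : ‖v‖ * ‖v‖ ≤ ‖Ψ‖ * ‖v‖ := calc
    ‖v‖ * ‖v‖ = RCLike.re (inner 𝕜 Ψ (analysisOp σ v)) := by
      rw [← inner_synthesisOp_left, inner_self_eq_norm_mul_norm]
    _ ≤ ‖Ψ‖ * ‖analysisOp σ v‖ := re_inner_le_norm _ _
    _ = ‖Ψ‖ * ‖v‖ := by rw [hσ.norm_analysisOp_apply]
  rcases (norm_nonneg v).eq_or_lt with hv | hv
  · rw [← hv]
    exact norm_nonneg _
  · exact le_of_mul_le_mul_right h hv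

lemma opNorm_analysisOp_le (hσ : IsQuantumPartitionOfUnity σ) : ‖analysisOp σ‖ ≤ 1 :=
  opNorm_le_bound _ zero_le_one fun x => by rw [hσ.norm_analysisOp_apply, one_mul]

lemma opNorm_synthesisOp_le (hσ : IsQuantumPartitionOfUnity σ) : ‖synthesisOp σ‖ ≤ 1 :=
  opNorm_le_bound _ zero_le_one fun Ψ => by
    rw [one_mul]
    exact hσ.norm_synthesisOp_apply_le Ψ

end IsQuantumPartitionOfUnity

end QuantumPartitionOfUnity

lemma opNorm_comp_comp_le_of_opNorm_le_one {𝕜 E F G K : Type*} [NontriviallyNormedField 𝕜]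
    [SeminormedAddCommGroup E] [SeminormedAddCommGroup F] [SeminormedAddCommGroup G]
    [SeminormedAddCommGroup K] [NormedSpace 𝕜 E] [NormedSpace 𝕜 F] [NormedSpace 𝕜 G]
    [NormedSpace 𝕜 K] {A : G →L[𝕜] K} {B : E →L[𝕜] F}
    (hA : ‖A‖ ≤ 1) (hB : ‖B‖ ≤ 1) (U : F →L[𝕜] G) : ‖A ∘L U ∘L B‖ ≤ ‖U‖ := calc
  ‖A ∘L U ∘L B‖ ≤ ‖A‖ * (‖U‖ * ‖B‖) :=
    (opNorm_comp_le _ _).trans (mul_le_mul_of_nonneg_left (opNorm_comp_le _ _) (norm_nonneg _))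
  _ ≤ 1 * (‖U‖ * 1) := by gcongr
  _ = ‖U‖ := by ring

theorem matrix_operator_norm_eq_general
    {H : Type*} [NormedAddCommGroup H] [InnerProductSpace ℂ H] [CompleteSpace H]
    (N M : ℕ)
    (π : Fin N → H →L[ℂ] H) (τ : Fin M → H →L[ℂ] H)
    (hπ : ∑ k, π k ∘L (π k).adjoint = (1 : H →L[ℂ] H))
    (hτ : ∑ j, τ j ∘L (τ j).adjoint = (1 : H →L[ℂ] H))
    (U : H →L[ℂ] H)
    (T : PiLp 2 (fun _ : Fin N => H) →L[ℂ] PiLp 2 (fun _ : Fin M => H))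
    (hT : ∀ (Ψ : PiLp 2 (fun _ : Fin N => H)) (j : Fin M),
      T Ψ j = ∑ k, (τ j).adjoint (U (π k (Ψ k)))) :
    ‖T‖ = ‖U‖ := by
  have hπ : IsQuantumPartitionOfUnity π := hπ
  have hτ : IsQuantumPartitionOfUnity τ := hτ
  have hT_factor : T = analysisOp τ ∘L U ∘L synthesisOp π := by
    ext Ψ j
    simp [hT, synthesisOp_apply]
  have hU_factor : U = synthesisOp τ ∘L T ∘L analysisOp π := by
    ext x
    simp [hT_factor, hτ.synthesisOp_analysisOp, hπ.synthesisOp_analysisOp]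
  apply le_antisymm
  · rw [hT_factor]
    exact opNorm_comp_comp_le_of_opNorm_le_one hτ.opNorm_analysisOp_le hπ.opNorm_synthesisOp_le U
  · conv_lhs => rw [hU_factor]
    exact opNorm_comp_comp_le_of_opNorm_le_one hτ.opNorm_synthesisOp_le hπ.opNorm_analysisOp_le T

theorem matrix_operator_norm_eq
    {H : Type*} [NormedAddCommGroup H] [InnerProductSpace ℂ H] [CompleteSpace H]
    (N M : ℕ) (hN : 0 < N) (hM : 0 < M)
    (π : Fin N → H →L[ℂ] H) (τ : Fin M → H →L[ℂ] H)
    (hπ : ∑ k, π k ∘L (π k).adjoint = (1 : H →L[ℂ] H))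
    (hτ : ∑ j, τ j ∘L (τ j).adjoint = (1 : H →L[ℂ] H))
    (U : H →L[ℂ] H)
    (T : PiLp 2 (fun _ : Fin N => H) →L[ℂ] PiLp 2 (fun _ : Fin M => H))
    (hT : ∀ (Ψ : PiLp 2 (fun _ : Fin N => H)) (j : Fin M),
      T Ψ j = ∑ k, (τ j).adjoint (U (π k (Ψ k)))) :
    ‖T‖ = ‖U‖ :=
  matrix_operator_norm_eq_general N M π τ hπ hτ U T hT
end

section
/- Let H be a complex Hilbert space with a quantum partition of unity (π_k)_{k=1,...,N} (∑_k π_k π_k* = Id), an isometry U on H, a bounded operator O on H, positive weights (α_k), (β_j) with A = max_k α_k and B = max_j β_j, and set c = max_{j,k} α_k β_j ‖π_j* U π_k O‖. Let ε ≥ 0, and let ψ ∈ H be a unit vector such that ‖(Id − O) π_k* ψ‖ ≤ ε for all k. Define the pressures p_α(ψ) = −∑_k ‖π_k* ψ‖² log ‖π_k* ψ‖² − ∑_k ‖π_k* ψ‖² log α_k², and similarly p_β(Uψ) with weights β and the vectors π_j* U ψ. Then p_β(Uψ) + p_α(ψ) ≥ −2 log(c + N·A·B·ε). -/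
/-!
This is the Riesz–Thorin argument behind the Maassen–Uffink inequality. Put
`q j = ‖π_j* Uψ‖²`, `p k = ‖π_k* ψ‖²` and `c j k = ⟪π_j* Uψ, π_j* U π_k π_k* ψ⟫`, so that
`∑ c j k = ‖ψ‖² = 1`. For real weights `ℓ, ℓ'` the entire function
`F z = ∑ exp (z ℓ j) exp (z ℓ' k) c j k` is bounded on the line `Re z = s / 2 < 0` by
`(∑ q j exp (s ℓ j))^(1/2) (∑ p k exp (s ℓ' k))^(1/2)` (Cauchy–Schwarz and `∑ π_k π_k* = 1`),
and on the line `Re z = 1` by `C = ∑ exp (ℓ j + ℓ' k) ‖c j k‖`. Hadamard's three lines theorem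
at `z = 0`, where `F = 1`, gives `s log C ≤ log ∑ q j exp (s ℓ j) + log ∑ p k exp (s ℓ' k)`
for `s < 0`, with equality at `s = 0`; comparing derivatives at `s = 0` yields
`∑ q j ℓ j + ∑ p k ℓ' k ≤ log C`. With `ℓ j = log (β_j ‖π_j* Uψ‖)` and
`ℓ' k = log (α_k ‖π_k* ψ‖)`, the localisation `‖(1 - O) π_k* ψ‖ ≤ ε` bounds `C` by `c + N A B ε`.
-/

open scoped InnerProductSpace

lemma HasDerivAt.nonpos_of_isMinOn_Iic {f : ℝ → ℝ} {f' x : ℝ} (hf : HasDerivAt f f' x)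
    (hmin : IsMinOn f (Set.Iic x) x) : f' ≤ 0 := by
  refine le_of_tendsto hf.tendsto_slope_zero_left ?_
  filter_upwards [self_mem_nhdsWithin] with t (ht : t < 0)
  exact mul_nonpos_of_nonpos_of_nonneg (inv_nonpos.2 ht.le)
    (sub_nonneg.2 (isMinOn_iff.1 hmin _ (by simpa using ht.le)))

-- `Real.log 0 = 0`, so `exp (log x) = x` fails at `x = 0`; the factor `a` absorbs that case.
lemma Real.exp_log_mul_eq_mul {x a : ℝ} (hx : 0 ≤ x) (h : x = 0 → a = 0) :
    Real.exp (Real.log x) * a = x * a := by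
  rcases hx.eq_or_lt with rfl | hx
  · simp [h rfl]
  · rw [Real.exp_log hx]

lemma sum_sq_mul_log_sq_add_sum_sq_mul_log_sq {ι : Type*} [Fintype ι] (x : ι → ℝ)
    {w : ι → ℝ} (hw : ∀ j, w j ≠ 0) :
    ∑ j, x j ^ 2 * Real.log (x j ^ 2) + ∑ j, x j ^ 2 * Real.log (w j ^ 2) =
      2 * ∑ j, x j ^ 2 * Real.log (w j * x j) := by
  rw [← Finset.sum_add_distrib, Finset.mul_sum]
  refine Finset.sum_congr rfl fun j _ ↦ ?_
  rcases eq_or_ne (x j) 0 with h | h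
  · simp [h]
  · rw [Real.log_mul (hw j) h, Real.log_pow, Real.log_pow]
    ring

section Interpolation

open scoped Complex

variable {ι κ : Type*} [Fintype ι] [Fintype κ]

lemma hasDerivAt_log_sum_mul_exp {q : ι → ℝ} (hq1 : ∑ j, q j = 1) (ℓ : ι → ℝ) :
    HasDerivAt (fun s ↦ Real.log (∑ j, q j * Real.exp (s * ℓ j))) (∑ j, q j * ℓ j) 0 := by
  have h := HasDerivAt.fun_sum (u := Finset.univ) fun j _ ↦
    ((hasDerivAt_mul_const (ℓ j)).exp).const_mul (q j) (x := 0)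
  simp only [zero_mul, Real.exp_zero, one_mul] at h
  simpa [hq1] using h.log (by simp [hq1])

lemma sum_mul_exp_pos {q : ι → ℝ} (hq : ∀ j, 0 ≤ q j) (hq1 : ∑ j, q j = 1) (ℓ : ι → ℝ)
    (s : ℝ) : 0 < ∑ j, q j * Real.exp (s * ℓ j) := by
  obtain ⟨j, -, hj⟩ := Finset.exists_ne_zero_of_sum_ne_zero (hq1.trans_ne one_ne_zero)
  exact Finset.sum_pos' (fun i _ ↦ mul_nonneg (hq i) (Real.exp_pos _).le)
    ⟨j, Finset.mem_univ j, mul_pos ((hq j).lt_of_ne' hj) (Real.exp_pos _)⟩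

lemma sum_sum_exp_mul_exp_mul_norm_pos {c : ι → κ → ℂ} (hc1 : ∑ j, ∑ k, c j k = 1)
    (ℓ : ι → ℝ) (ℓ' : κ → ℝ) :
    0 < ∑ j, ∑ k, Real.exp (ℓ j) * Real.exp (ℓ' k) * ‖c j k‖ := by
  obtain ⟨j, -, hj⟩ := Finset.exists_ne_zero_of_sum_ne_zero (hc1.trans_ne one_ne_zero)
  obtain ⟨k, -, hk⟩ := Finset.exists_ne_zero_of_sum_ne_zero hj
  refine Finset.sum_pos' (fun i _ ↦ by positivity) ⟨j, Finset.mem_univ j, ?_⟩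
  exact Finset.sum_pos' (fun i _ ↦ by positivity) ⟨k, Finset.mem_univ k, by positivity⟩

lemma norm_sum_sum_cexp_mul_le (c : ι → κ → ℂ) (ℓ : ι → ℝ) (ℓ' : κ → ℝ) (z : ℂ) :
    ‖∑ j, ∑ k, cexp (z * ℓ j) * cexp (z * ℓ' k) * c j k‖ ≤
      ∑ j, ∑ k, Real.exp (z.re * ℓ j) * Real.exp (z.re * ℓ' k) * ‖c j k‖ := by
  refine (norm_sum_le _ _).trans (Finset.sum_le_sum fun j _ ↦ (norm_sum_le _ _).trans_eq ?_)
  simp only [norm_mul, Complex.norm_exp, Complex.re_mul_ofReal]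

open Complex.HadamardThreeLines in
lemma bddAbove_norm_sum_sum_cexp_mul_image_verticalClosedStrip (c : ι → κ → ℂ) (ℓ : ι → ℝ)
    (ℓ' : κ → ℝ) (a b : ℝ) :
    BddAbove ((fun z ↦ ‖∑ j, ∑ k, cexp (z * ℓ j) * cexp (z * ℓ' k) * c j k‖) ''
      verticalClosedStrip a b) := by
  obtain ⟨M, hM⟩ := (isCompact_Icc (a := a) (b := b)).bddAbove_image
    (f := fun x : ℝ ↦ ∑ j, ∑ k, Real.exp (x * ℓ j) * Real.exp (x * ℓ' k) * ‖c j k‖)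
    (by fun_prop)
  refine ⟨M, ?_⟩
  rintro _ ⟨z, hz, rfl⟩
  exact (norm_sum_sum_cexp_mul_le c ℓ ℓ' z).trans (hM ⟨z.re, hz, rfl⟩)

variable {q : ι → ℝ} {p : κ → ℝ} {c : ι → κ → ℂ}
  (hq : ∀ j, 0 ≤ q j) (hq1 : ∑ j, q j = 1) (hp : ∀ k, 0 ≤ p k) (hp1 : ∑ k, p k = 1)
  (hc1 : ∑ j, ∑ k, c j k = 1)
  (hc2 : ∀ (w : ι → ℂ) (w' : κ → ℂ), ‖∑ j, ∑ k, w j * w' k * c j k‖ ≤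
    √(∑ j, q j * ‖w j‖ ^ 2) * √(∑ k, p k * ‖w' k‖ ^ 2))
  {ℓ : ι → ℝ} {ℓ' : κ → ℝ} {C : ℝ}
  (hC : ∑ j, ∑ k, Real.exp (ℓ j) * Real.exp (ℓ' k) * ‖c j k‖ ≤ C)
include hq hq1 hp hp1 hc1 hc2 hC

open Complex.HadamardThreeLines in
lemma mul_log_le_log_sum_mul_exp_add_log_sum_mul_exp {s : ℝ} (hs : s < 0) :
    s * Real.log C ≤
      Real.log (∑ j, q j * Real.exp (s * ℓ j)) + Real.log (∑ k, p k * Real.exp (s * ℓ' k)) := by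
  have hCpos := (sum_sum_exp_mul_exp_mul_norm_pos hc1 ℓ ℓ').trans_le hC
  set Mq := ∑ j, q j * Real.exp (s * ℓ j)
  set Mp := ∑ k, p k * Real.exp (s * ℓ' k)
  have hMq : 0 < Mq := sum_mul_exp_pos hq hq1 ℓ s
  have hMp : 0 < Mp := sum_mul_exp_pos hp hp1 ℓ' s
  set F : ℂ → ℂ := fun z ↦ ∑ j, ∑ k, cexp (z * ℓ j) * cexp (z * ℓ' k) * c j k
  have hF0 : F 0 = 1 := by simp [F, hc1]
  have hleft : ∀ z ∈ Complex.re ⁻¹' {s / 2}, ‖F z‖ ≤ √Mq * √Mp := by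
    rintro z (hz : z.re = s / 2)
    have hsq (x : ℝ) : ‖cexp (z * x)‖ ^ 2 = Real.exp (s * x) := by
      rw [Complex.norm_exp, Complex.re_mul_ofReal, hz, sq, ← Real.exp_add]
      ring_nf
    simpa only [hsq] using hc2 (fun j ↦ cexp (z * ℓ j)) (fun k ↦ cexp (z * ℓ' k))
  have hright : ∀ z ∈ Complex.re ⁻¹' {1}, ‖F z‖ ≤ C := by
    rintro z (hz : z.re = 1)
    refine (norm_sum_sum_cexp_mul_le c ℓ ℓ' z).trans ?_
    simpa only [hz, one_mul] using hC
  have hbdd : BddAbove ((norm ∘ F) '' verticalClosedStrip (s / 2) 1) :=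
    bddAbove_norm_sum_sum_cexp_mul_image_verticalClosedStrip c ℓ ℓ' _ _
  have hdiff : Differentiable ℂ F := by fun_prop
  have hthree := norm_le_interp_of_mem_verticalClosedStrip' (z := 0) (by linarith)
    (by simp [verticalClosedStrip]; linarith) hdiff.diffContOnCl hbdd hleft hright
  rw [hF0, norm_one] at hthree
  have hlog := Real.log_nonneg hthree
  rw [Real.log_mul (by positivity) (by positivity), Real.log_rpow (by positivity),
    Real.log_rpow hCpos, Real.log_mul (by positivity) (by positivity),
    Real.log_sqrt hMq.le, Real.log_sqrt hMp.le] at hlog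
  have h2s : 0 < 2 - s := by linarith
  have key : (1 - ((0 : ℂ).re - s / 2) / (1 - s / 2)) *
      (Real.log Mq / 2 + Real.log Mp / 2) + ((0 : ℂ).re - s / 2) / (1 - s / 2) * Real.log C =
      (Real.log Mq + Real.log Mp - s * Real.log C) / (2 - s) := by
    simp only [Complex.zero_re]
    field_simp
    ring
  rw [key] at hlog
  linarith [(div_nonneg_iff.mp hlog).resolve_right (fun h ↦ by linarith [h.2])]

theorem sum_mul_add_sum_mul_le_log : ∑ j, q j * ℓ j + ∑ k, p k * ℓ' k ≤ Real.log C := by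
  have hderiv := ((hasDerivAt_log_sum_mul_exp hq1 ℓ).add
    (hasDerivAt_log_sum_mul_exp hp1 ℓ')).sub ((hasDerivAt_id 0).mul_const (Real.log C))
  have hmin : IsMinOn (fun s ↦ Real.log (∑ j, q j * Real.exp (s * ℓ j)) +
      Real.log (∑ k, p k * Real.exp (s * ℓ' k)) - id s * Real.log C) (Set.Iic 0) 0 := by
    refine isMinOn_iff.2 fun s (hs : s ≤ 0) ↦ ?_
    rcases hs.lt_or_eq with hs | rfl
    · simp only [zero_mul, Real.exp_zero, mul_one, hq1, hp1, Real.log_one, id]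
      linarith [mul_log_le_log_sum_mul_exp_add_log_sum_mul_exp hq hq1 hp hp1 hc1 hc2 hC hs]
    · exact le_rfl
  linarith [hderiv.nonpos_of_isMinOn_Iic hmin]

end Interpolation

section QuantumPartition

variable {𝕜 H ι : Type*} [RCLike 𝕜] [NormedAddCommGroup H] [InnerProductSpace 𝕜 H]
  [CompleteSpace H] [Fintype ι]

def IsQuantumPartition (π : ι → H →L[𝕜] H) : Prop :=
  ∑ k, π k ∘L (π k).adjoint = 1

noncomputable def transitionCoeff (π : ι → H →L[𝕜] H) (U : H →ₗᵢ[𝕜] H) (ψ : H) (j k : ι) : 𝕜 :=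
  ⟪(π j).adjoint (U ψ), (π j).adjoint (U (π k ((π k).adjoint ψ)))⟫_𝕜

namespace IsQuantumPartition

variable {π : ι → H →L[𝕜] H} (hπ : IsQuantumPartition π)
include hπ

lemma sum_apply_adjoint_apply (x : H) : ∑ k, π k ((π k).adjoint x) = x := by
  simpa using congr($hπ x)

lemma sum_norm_adjoint_apply_sq (x : H) : ∑ k, ‖(π k).adjoint x‖ ^ 2 = ‖x‖ ^ 2 := by
  have : ∑ k, ⟪(π k).adjoint x, (π k).adjoint x⟫_𝕜 = ⟪x, x⟫_𝕜 := by
    simp_rw [ContinuousLinearMap.adjoint_inner_left, ← inner_sum, hπ.sum_apply_adjoint_apply]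
  simpa only [inner_self_eq_norm_sq_to_K, ← RCLike.ofReal_pow, ← RCLike.ofReal_sum,
    RCLike.ofReal_inj] using this

lemma norm_adjoint_apply_le (k : ι) (x : H) : ‖(π k).adjoint x‖ ≤ ‖x‖ := by
  refine pow_le_pow_iff_left₀ (norm_nonneg _) (norm_nonneg _) two_ne_zero |>.mp ?_
  rw [← hπ.sum_norm_adjoint_apply_sq x]
  exact Finset.single_le_sum (fun i _ ↦ sq_nonneg ‖(π i).adjoint x‖) (Finset.mem_univ k)

lemma norm_le_one (k : ι) : ‖π k‖ ≤ 1 := by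
  rw [← LinearIsometryEquiv.norm_map ContinuousLinearMap.adjoint]
  exact ContinuousLinearMap.opNorm_le_bound _ zero_le_one fun x ↦ by
    simpa using hπ.norm_adjoint_apply_le k x

lemma norm_apply_le (k : ι) (x : H) : ‖π k x‖ ≤ ‖x‖ :=
  ((π k).le_opNorm x).trans (mul_le_of_le_one_left (norm_nonneg x) (hπ.norm_le_one k))

/-- The synthesis map `(x k) ↦ ∑ k, π k (x k)` is the adjoint of the isometry
`x ↦ ((π k).adjoint x)`, hence a contraction. -/
lemma norm_sum_apply_sq_le (x : ι → H) : ‖∑ k, π k (x k)‖ ^ 2 ≤ ∑ k, ‖x k‖ ^ 2 := by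
  set y := ∑ k, π k (x k)
  have hy : ‖y‖ ^ 2 ≤ √(∑ k, ‖x k‖ ^ 2) * ‖y‖ :=
    calc ‖y‖ ^ 2 = RCLike.re ⟪y, y⟫_𝕜 := by rw [inner_self_eq_norm_sq]
      _ = ∑ k, RCLike.re ⟪x k, (π k).adjoint y⟫_𝕜 := by
        simp only [ContinuousLinearMap.adjoint_inner_right, ← map_sum, ← sum_inner, y]
      _ ≤ ∑ k, ‖x k‖ * ‖(π k).adjoint y‖ :=
        Finset.sum_le_sum fun k _ ↦ (RCLike.re_le_norm _).trans (norm_inner_le_norm _ _)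
      _ ≤ √(∑ k, ‖x k‖ ^ 2) * √(∑ k, ‖(π k).adjoint y‖ ^ 2) := Real.sum_mul_le_sqrt_mul_sqrt _ _ _
      _ = √(∑ k, ‖x k‖ ^ 2) * ‖y‖ := by
        rw [hπ.sum_norm_adjoint_apply_sq, Real.sqrt_sq (norm_nonneg y)]
  have : ‖y‖ ≤ √(∑ k, ‖x k‖ ^ 2) := by
    rcases (norm_nonneg y).eq_or_lt with h | h
    · rw [← h]; positivity
    · exact le_of_mul_le_mul_right (by nlinarith) h
  calc ‖y‖ ^ 2 ≤ √(∑ k, ‖x k‖ ^ 2) ^ 2 := by gcongr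
    _ = ∑ k, ‖x k‖ ^ 2 := Real.sq_sqrt (by positivity)

section Transition

variable (U : H →ₗᵢ[𝕜] H) (ψ : H) (O : H →L[𝕜] H)

lemma sum_sum_transitionCoeff :
    ∑ j, ∑ k, transitionCoeff π U ψ j k = ((‖ψ‖ ^ 2 : ℝ) : 𝕜) := by
  simp only [transitionCoeff, ← inner_sum, ← map_sum, hπ.sum_apply_adjoint_apply,
    inner_self_eq_norm_sq_to_K, ← RCLike.ofReal_pow,
    hπ.sum_norm_adjoint_apply_sq, U.norm_map]

lemma norm_sum_sum_mul_transitionCoeff_le (w w' : ι → 𝕜) :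
    ‖∑ j, ∑ k, w j * w' k * transitionCoeff π U ψ j k‖ ≤
      √(∑ j, ‖(π j).adjoint (U ψ)‖ ^ 2 * ‖w j‖ ^ 2) *
        √(∑ k, ‖(π k).adjoint ψ‖ ^ 2 * ‖w' k‖ ^ 2) := by
  set y := ∑ k, π k (w' k • (π k).adjoint ψ)
  have hrow : ∀ j, ∑ k, w j * w' k * transitionCoeff π U ψ j k =
      w j * ⟪(π j).adjoint (U ψ), (π j).adjoint (U y)⟫_𝕜 := fun j ↦ by
    simp only [transitionCoeff, y, map_sum, map_smul, inner_sum, inner_smul_right,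
      Finset.mul_sum, mul_assoc]
  have hy : ‖y‖ ≤ √(∑ k, ‖(π k).adjoint ψ‖ ^ 2 * ‖w' k‖ ^ 2) := by
    refine Real.le_sqrt_of_sq_le ((hπ.norm_sum_apply_sq_le _).trans_eq ?_)
    simp only [norm_smul, mul_pow, mul_comm]
  calc ‖∑ j, ∑ k, w j * w' k * transitionCoeff π U ψ j k‖
      ≤ ∑ j, (‖(π j).adjoint (U ψ)‖ * ‖w j‖) * ‖(π j).adjoint (U y)‖ := by
        simp only [hrow]
        refine (norm_sum_le _ _).trans (Finset.sum_le_sum fun j _ ↦ ?_)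
        rw [norm_mul, mul_comm ‖(π j).adjoint (U ψ)‖, mul_assoc]
        gcongr
        exact norm_inner_le_norm _ _
    _ ≤ √(∑ j, (‖(π j).adjoint (U ψ)‖ * ‖w j‖) ^ 2) * √(∑ j, ‖(π j).adjoint (U y)‖ ^ 2) :=
        Real.sum_mul_le_sqrt_mul_sqrt _ _ _
    _ ≤ _ := by
        rw [hπ.sum_norm_adjoint_apply_sq, U.norm_map, Real.sqrt_sq (norm_nonneg y)]
        simp only [mul_pow]
        gcongr

lemma norm_transitionCoeff_le (j k : ι) :
    ‖transitionCoeff π U ψ j k‖ ≤ ‖(π j).adjoint (U ψ)‖ *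
      (‖(π j).adjoint ∘L (U.toContinuousLinearMap ∘L (π k ∘L O))‖ * ‖(π k).adjoint ψ‖ +
        ‖(π k).adjoint ψ - O ((π k).adjoint ψ)‖) := by
  set u := (π k).adjoint ψ
  have hsplit : (π j).adjoint (U (π k u)) =
      ((π j).adjoint ∘L (U.toContinuousLinearMap ∘L (π k ∘L O))) u +
        (π j).adjoint (U (π k (u - O u))) := by
    simp [map_sub]
  have hdefect : ‖(π j).adjoint (U (π k (u - O u)))‖ ≤ ‖u - O u‖ :=
    (hπ.norm_adjoint_apply_le j _).trans <| (U.norm_map _).trans_le (hπ.norm_apply_le k _)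
  refine (norm_inner_le_norm _ _).trans ?_
  gcongr
  rw [hsplit]
  exact (norm_add_le _ _).trans (add_le_add (ContinuousLinearMap.le_opNorm _ _) hdefect)

lemma exp_log_mul_exp_log_mul_norm_transitionCoeff_le {a b : ℝ}
    (ha : 0 < a) (hb : 0 < b) (j k : ι) :
    Real.exp (Real.log (a * ‖(π j).adjoint (U ψ)‖)) *
        Real.exp (Real.log (b * ‖(π k).adjoint ψ‖)) * ‖transitionCoeff π U ψ j k‖ ≤
      b * a * ‖(π j).adjoint (U ψ)‖ ^ 2 *
        (‖(π j).adjoint ∘L (U.toContinuousLinearMap ∘L (π k ∘L O))‖ * ‖(π k).adjoint ψ‖ ^ 2 +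
          ‖(π k).adjoint ψ‖ * ‖(π k).adjoint ψ - O ((π k).adjoint ψ)‖) := by
  have hc := hπ.norm_transitionCoeff_le U ψ O j k
  rw [mul_assoc, Real.exp_log_mul_eq_mul (by positivity) fun h ↦ ?_,
    Real.exp_log_mul_eq_mul (by positivity) fun h ↦ ?_]
  · calc a * ‖(π j).adjoint (U ψ)‖ * (b * ‖(π k).adjoint ψ‖ * ‖transitionCoeff π U ψ j k‖)
        ≤ a * ‖(π j).adjoint (U ψ)‖ * (b * ‖(π k).adjoint ψ‖ * (‖(π j).adjoint (U ψ)‖ *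
          (‖(π j).adjoint ∘L (U.toContinuousLinearMap ∘L (π k ∘L O))‖ * ‖(π k).adjoint ψ‖ +
            ‖(π k).adjoint ψ - O ((π k).adjoint ψ)‖))) := by gcongr
      _ = _ := by ring
  · have hu : (π k).adjoint ψ = 0 := norm_eq_zero.1 ((mul_eq_zero.1 h).resolve_left hb.ne')
    simpa [hu] using hc
  · have hv : ‖(π j).adjoint (U ψ)‖ = 0 := (mul_eq_zero.1 h).resolve_left ha.ne'
    rw [hv, zero_mul] at hc
    simp [le_antisymm hc (norm_nonneg _)]

lemma sum_sum_exp_log_mul_exp_log_mul_norm_transitionCoeff_le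
    (hψ : ‖ψ‖ = 1) {α β : ι → ℝ} (hα : ∀ k, 0 < α k) (hβ : ∀ j, 0 < β j) {A B c ε : ℝ}
    (hαA : ∀ k, α k ≤ A) (hβB : ∀ j, β j ≤ B)
    (hc : ∀ j k, α k * β j * ‖(π j).adjoint ∘L (U.toContinuousLinearMap ∘L (π k ∘L O))‖ ≤ c)
    (hloc : ∀ k, ‖(π k).adjoint ψ - O ((π k).adjoint ψ)‖ ≤ ε) :
    ∑ j, ∑ k, Real.exp (Real.log (β j * ‖(π j).adjoint (U ψ)‖)) *
        Real.exp (Real.log (α k * ‖(π k).adjoint ψ‖)) * ‖transitionCoeff π U ψ j k‖ ≤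
      c + Fintype.card ι * A * B * ε := by
  have hq1 : ∑ j, ‖(π j).adjoint (U ψ)‖ ^ 2 = 1 := by
    rw [hπ.sum_norm_adjoint_apply_sq, U.norm_map, hψ, one_pow]
  have hp1 : ∑ k, ‖(π k).adjoint ψ‖ ^ 2 = 1 := by
    rw [hπ.sum_norm_adjoint_apply_sq, hψ, one_pow]
  calc _ ≤ ∑ j, ∑ k, (c * ‖(π j).adjoint (U ψ)‖ ^ 2 * ‖(π k).adjoint ψ‖ ^ 2 +
        A * B * ε * ‖(π j).adjoint (U ψ)‖ ^ 2) := by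
        gcongr with j _ k _
        refine (hπ.exp_log_mul_exp_log_mul_norm_transitionCoeff_le U ψ O (hβ j) (hα k) j k).trans ?_
        have hαβ : α k * β j ≤ A * B :=
          mul_le_mul (hαA k) (hβB j) (hβ j).le ((hα k).le.trans (hαA k))
        have hdefect : ‖(π k).adjoint ψ‖ * ‖(π k).adjoint ψ - O ((π k).adjoint ψ)‖ ≤ ε :=
          (mul_le_of_le_one_left (norm_nonneg _)
            ((hπ.norm_adjoint_apply_le k ψ).trans hψ.le)).trans (hloc k)
        have hAB : 0 ≤ A * B := (mul_pos (hα k) (hβ j)).le.trans hαβ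
        linarith [mul_le_mul_of_nonneg_right (hc j k)
            (by positivity : 0 ≤ ‖(π j).adjoint (U ψ)‖ ^ 2 * ‖(π k).adjoint ψ‖ ^ 2),
          mul_le_mul_of_nonneg_right (mul_le_mul hαβ hdefect (by positivity) hAB)
            (sq_nonneg ‖(π j).adjoint (U ψ)‖)]
    _ = c + Fintype.card ι * A * B * ε := by
        simp only [Finset.sum_add_distrib, ← Finset.mul_sum, ← Finset.sum_mul, hp1, hq1,
          Finset.sum_const, Finset.card_univ, nsmul_eq_mul]
        ring

end Transition

end IsQuantumPartition

end QuantumPartition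

theorem weighted_entropic_uncertainty_principle_general
    {H : Type*} [NormedAddCommGroup H] [InnerProductSpace ℂ H] [CompleteSpace H]
    (N : ℕ) [NeZero N] (π : Fin N → H →L[ℂ] H)
    (hπ : ∑ k, π k ∘L (π k).adjoint = (1 : H →L[ℂ] H))
    (U : H →ₗᵢ[ℂ] H) (O : H →L[ℂ] H)
    (α β : Fin N → ℝ) (hα : ∀ k, 0 < α k) (hβ : ∀ j, 0 < β j)
    (A B c ε : ℝ)
    (hA : A = Finset.univ.sup' Finset.univ_nonempty α)
    (hB : B = Finset.univ.sup' Finset.univ_nonempty β)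
    (hc : c = Finset.univ.sup' Finset.univ_nonempty
      (fun jk : Fin N × Fin N =>
        α jk.2 * β jk.1 *
          ‖(π jk.1).adjoint ∘L (U.toContinuousLinearMap ∘L (π jk.2 ∘L O))‖))
    (ψ : H) (hψ : ‖ψ‖ = 1)
    (hloc : ∀ k, ‖(π k).adjoint ψ - O ((π k).adjoint ψ)‖ ≤ ε) :
    ((-∑ j, ‖(π j).adjoint (U ψ)‖ ^ 2 * Real.log (‖(π j).adjoint (U ψ)‖ ^ 2))
        - ∑ j, ‖(π j).adjoint (U ψ)‖ ^ 2 * Real.log ((β j) ^ 2))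
      + ((-∑ k, ‖(π k).adjoint ψ‖ ^ 2 * Real.log (‖(π k).adjoint ψ‖ ^ 2))
        - ∑ k, ‖(π k).adjoint ψ‖ ^ 2 * Real.log ((α k) ^ 2))
      ≥ -2 * Real.log (c + N * A * B * ε) := by
  have hπ : IsQuantumPartition π := hπ
  have hendpoint := hπ.sum_sum_exp_log_mul_exp_log_mul_norm_transitionCoeff_le U ψ O hψ hα hβ
    (fun k ↦ hA ▸ Finset.le_sup' α (Finset.mem_univ k))
    (fun j ↦ hB ▸ Finset.le_sup' β (Finset.mem_univ j))
    (fun j k ↦ hc ▸ Finset.le_sup' _ (Finset.mem_univ (j, k))) hloc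
  rw [Fintype.card_fin] at hendpoint
  have hinterp := sum_mul_add_sum_mul_le_log (fun _ ↦ sq_nonneg _)
    (by rw [hπ.sum_norm_adjoint_apply_sq, U.norm_map, hψ, one_pow]) (fun _ ↦ sq_nonneg _)
    (by rw [hπ.sum_norm_adjoint_apply_sq, hψ, one_pow])
    (by rw [hπ.sum_sum_transitionCoeff, hψ]; norm_num)
    (hπ.norm_sum_sum_mul_transitionCoeff_le U ψ) hendpoint
  linarith [sum_sq_mul_log_sq_add_sum_sq_mul_log_sq (fun j ↦ ‖(π j).adjoint (U ψ)‖)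
      fun j ↦ (hβ j).ne',
    sum_sq_mul_log_sq_add_sum_sq_mul_log_sq (fun k ↦ ‖(π k).adjoint ψ‖) fun k ↦ (hα k).ne']

theorem weighted_entropic_uncertainty_principle
    {H : Type*} [NormedAddCommGroup H] [InnerProductSpace ℂ H] [CompleteSpace H]
    (N : ℕ) [NeZero N] (π : Fin N → H →L[ℂ] H)
    (hπ : ∑ k, π k ∘L (π k).adjoint = (1 : H →L[ℂ] H))
    (U : H →ₗᵢ[ℂ] H) (O : H →L[ℂ] H)
    (α β : Fin N → ℝ) (hα : ∀ k, 0 < α k) (hβ : ∀ j, 0 < β j)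
    (A B c ε : ℝ)
    (hA : A = Finset.univ.sup' Finset.univ_nonempty α)
    (hB : B = Finset.univ.sup' Finset.univ_nonempty β)
    (hc : c = Finset.univ.sup' Finset.univ_nonempty
      (fun jk : Fin N × Fin N =>
        α jk.2 * β jk.1 *
          ‖(π jk.1).adjoint ∘L (U.toContinuousLinearMap ∘L (π jk.2 ∘L O))‖))
    (hε : 0 ≤ ε) (ψ : H) (hψ : ‖ψ‖ = 1)
    (hloc : ∀ k, ‖(π k).adjoint ψ - O ((π k).adjoint ψ)‖ ≤ ε) :
    ((-∑ j, ‖(π j).adjoint (U ψ)‖ ^ 2 * Real.log (‖(π j).adjoint (U ψ)‖ ^ 2))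
        - ∑ j, ‖(π j).adjoint (U ψ)‖ ^ 2 * Real.log ((β j) ^ 2))
      + ((-∑ k, ‖(π k).adjoint ψ‖ ^ 2 * Real.log (‖(π k).adjoint ψ‖ ^ 2))
        - ∑ k, ‖(π k).adjoint ψ‖ ^ 2 * Real.log ((α k) ^ 2))
      ≥ -2 * Real.log (c + N * A * B * ε) :=
  weighted_entropic_uncertainty_principle_general N π hπ U O α β hα hβ A B c ε hA hB hc ψ hψ hloc
end

section
/- Let H be a complex Hilbert space with an orthonormal basis (e_k)_{k=1,...,N}, and let U : H → H be unitary. Set c(U) = max_{j,k} |⟨e_j, U e_k⟩|. For a unit vector ψ, define the Shannon entropy h(ψ) = −∑_k |⟨e_k, ψ⟩|² log |⟨e_k, ψ⟩|². Then for every unit vector ψ, h(Uψ) + h(ψ) ≥ −2 log c(U). -/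
/-!
The matrix `M j k = ⟪e j, U (e k)⟫` is a contraction of `ℓ²` and maps `ℓ¹` to `ℓ^∞` with norm at
most `c`. By Riesz–Thorin interpolation (Hadamard's three lines theorem applied to a pairing of the
analytic families `u |u| ^ (w - 1)`), for `0 < t < 1` it maps `ℓ^p` to `ℓ^q` with norm at most
`c ^ t`, where `1 / p = (1 + t) / 2` and `1 / q = (1 - t) / 2`. At `t = 0` this is the equality
`‖U ψ‖ = ‖ψ‖`, so the derivative at `t = 0` of the logarithm of the inequality has a sign; that
derivative is `log c + (h(U ψ) + h(ψ)) / 2`.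
-/

open Finset Real Filter Topology
open scoped ComplexConjugate Matrix

noncomputable def phasePow (u w : ℂ) : ℂ := u * (‖u‖ : ℂ) ^ (w - 1)

@[fun_prop]
theorem differentiable_phasePow (u : ℂ) : Differentiable ℂ (phasePow u) := by
  by_cases hu : u = 0
  · have hzero : phasePow u = fun _ => 0 := funext fun w => by simp [phasePow, hu]
    exact hzero ▸ differentiable_const 0
  · exact (differentiable_id.sub_const 1).const_cpow (.inl (by simpa using hu)) |>.const_mul u

theorem norm_phasePow (u : ℂ) {w : ℂ} (hw : 0 < w.re) : ‖phasePow u w‖ = ‖u‖ ^ w.re := by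
  by_cases hu : u = 0
  · simp [phasePow, hu, zero_rpow hw.ne']
  · have hu' : 0 < ‖u‖ := norm_pos_iff.mpr hu
    rw [phasePow, norm_mul, Complex.norm_cpow_eq_rpow_re_of_pos hu', Complex.sub_re,
      Complex.one_re, rpow_sub_one hu'.ne', mul_div_cancel₀ _ hu'.ne']

theorem phasePow_one (u : ℂ) : phasePow u 1 = u := by
  simp [phasePow]

theorem phasePow_conj_mul_self (u : ℂ) {s : ℝ} (hs : 0 < s) :
    phasePow (conj u) s * u = ((‖u‖ ^ (s + 1) : ℝ) : ℂ) := by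
  by_cases hu : u = 0
  · simp [hu, phasePow, zero_rpow (by linarith : s + 1 ≠ 0)]
  · have hu' : 0 < ‖u‖ := norm_pos_iff.mpr hu
    rw [phasePow, Complex.norm_conj, mul_right_comm, Complex.conj_mul', ← Complex.ofReal_one,
      ← Complex.ofReal_sub, ← Complex.ofReal_cpow hu'.le, ← Complex.ofReal_pow,
      ← Complex.ofReal_mul, ← rpow_two, ← rpow_add hu']
    ring_nf

section PhasePowFamily

variable {ι : Type*}

noncomputable def phasePowFamily (v : ι → ℂ) (s : ℝ) (z : ℂ) : ι → ℂ :=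
  fun k => phasePow (v k) ((1 + z) / s)

@[fun_prop]
theorem differentiable_phasePowFamily_apply (v : ι → ℂ) (s : ℝ) (k : ι) :
    Differentiable ℂ fun z => phasePowFamily v s z k :=
  (differentiable_phasePow (v k)).comp (by fun_prop)

theorem norm_phasePowFamily_apply (v : ι → ℂ) {s : ℝ} (hs : 0 < s) {z : ℂ} (hz : 0 ≤ z.re)
    (k : ι) : ‖phasePowFamily v s z k‖ = ‖v k‖ ^ ((1 + z.re) / s) := by
  have hre : ((1 + z) / s).re = (1 + z.re) / s := by simp
  rw [phasePowFamily, norm_phasePow _ (by rw [hre]; positivity), hre]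

theorem phasePowFamily_ofReal_self (v : ι → ℂ) {t : ℝ} (ht : 1 + t ≠ 0) :
    phasePowFamily v (1 + t) t = v := by
  have hexp : (1 + (t : ℂ)) / ((1 + t : ℝ) : ℂ) = 1 := by
    push_cast
    exact div_self (by exact_mod_cast ht)
  ext k
  rw [phasePowFamily, hexp, phasePow_one]

theorem phasePowFamily_star_ofReal_mul_self (v : ι → ℂ) {t : ℝ} (ht0 : -1 < t) (ht1 : t < 1)
    (k : ι) : phasePowFamily (star v) (1 - t) t k * v k = ((‖v k‖ ^ (2 / (1 - t)) : ℝ) : ℂ) := by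
  have hs : 0 < (1 + t) / (1 - t) := div_pos (by linarith) (by linarith)
  have hexp : (1 + (t : ℂ)) / ((1 - t : ℝ) : ℂ) = (((1 + t) / (1 - t) : ℝ) : ℂ) := by push_cast; rfl
  rw [phasePowFamily, hexp, Pi.star_apply, Complex.star_def, phasePow_conj_mul_self _ hs,
    div_add_one (by linarith), show 1 + t + (1 - t) = 2 by ring]

variable [Fintype ι]

theorem sum_norm_sq_phasePowFamily_of_re_eq_zero (v : ι → ℂ) {s : ℝ} (hs : 0 < s)
    {z : ℂ} (hz : z.re = 0) : ∑ k, ‖phasePowFamily v s z k‖ ^ 2 = ∑ k, ‖v k‖ ^ (2 / s) := by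
  refine sum_congr rfl fun k _ => ?_
  rw [norm_phasePowFamily_apply v hs hz.ge, hz, ← rpow_natCast, ← rpow_mul (norm_nonneg _)]
  norm_num [div_eq_mul_inv, mul_comm]

theorem sum_norm_phasePowFamily_of_re_eq_one (v : ι → ℂ) {s : ℝ} (hs : 0 < s) {z : ℂ}
    (hz : z.re = 1) : ∑ k, ‖phasePowFamily v s z k‖ = ∑ k, ‖v k‖ ^ (2 / s) := by
  refine sum_congr rfl fun k _ => ?_
  rw [norm_phasePowFamily_apply v hs (by rw [hz]; exact zero_le_one), hz, one_add_one_eq_two]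

theorem sum_norm_phasePowFamily_le_card {v : ι → ℂ} (hv : ∀ k, ‖v k‖ ≤ 1) {s : ℝ}
    (hs : 0 < s) {z : ℂ} (hz : 0 ≤ z.re) : ∑ k, ‖phasePowFamily v s z k‖ ≤ Fintype.card ι := by
  refine (sum_le_sum (g := fun _ => 1) fun k _ => ?_).trans_eq (by simp)
  rw [norm_phasePowFamily_apply v hs hz]
  exact rpow_le_one (norm_nonneg _) (hv k) (by positivity)

end PhasePowFamily

section MatrixBounds

variable {ι ι' : Type*} [Fintype ι] {M : Matrix ι' ι ℂ} {c : ℝ}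

theorem norm_mulVec_apply_le (hM : ∀ j k, ‖M j k‖ ≤ c) (v : ι → ℂ) (j : ι') :
    ‖(M *ᵥ v) j‖ ≤ c * ∑ k, ‖v k‖ :=
  calc ‖(M *ᵥ v) j‖ ≤ ∑ k, ‖M j k‖ * ‖v k‖ :=
        (norm_sum_le _ _).trans_eq (by simp only [norm_mul])
    _ ≤ ∑ k, c * ‖v k‖ := by gcongr; exact hM j _
    _ = c * ∑ k, ‖v k‖ := (mul_sum ..).symm

variable [Fintype ι']

theorem norm_dotProduct_mulVec_le_of_norm_entry_le (hM : ∀ j k, ‖M j k‖ ≤ c)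
    (y : ι' → ℂ) (v : ι → ℂ) : ‖y ⬝ᵥ (M *ᵥ v)‖ ≤ c * ((∑ j, ‖y j‖) * ∑ k, ‖v k‖) :=
  calc ‖y ⬝ᵥ (M *ᵥ v)‖ ≤ ∑ j, ‖y j‖ * ‖(M *ᵥ v) j‖ :=
        (norm_sum_le _ _).trans_eq (by simp only [norm_mul])
    _ ≤ ∑ j, ‖y j‖ * (c * ∑ k, ‖v k‖) := by gcongr; exact norm_mulVec_apply_le hM v _
    _ = c * ((∑ j, ‖y j‖) * ∑ k, ‖v k‖) := by rw [← sum_mul]; ring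

theorem norm_dotProduct_mulVec_le_sqrt (hM : ∀ v, ∑ j, ‖(M *ᵥ v) j‖ ^ 2 ≤ ∑ k, ‖v k‖ ^ 2)
    (y : ι' → ℂ) (v : ι → ℂ) :
    ‖y ⬝ᵥ (M *ᵥ v)‖ ≤ √((∑ j, ‖y j‖ ^ 2) * ∑ k, ‖v k‖ ^ 2) :=
  calc ‖y ⬝ᵥ (M *ᵥ v)‖ ≤ ∑ j, ‖y j‖ * ‖(M *ᵥ v) j‖ :=
        (norm_sum_le _ _).trans_eq (by simp only [norm_mul])
    _ ≤ √(∑ j, ‖y j‖ ^ 2) * √(∑ j, ‖(M *ᵥ v) j‖ ^ 2) := sum_mul_le_sqrt_mul_sqrt _ _ _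
    _ ≤ √((∑ j, ‖y j‖ ^ 2) * ∑ k, ‖v k‖ ^ 2) := by
        rw [sqrt_mul (sum_nonneg fun j _ => sq_nonneg _)]
        gcongr
        exact hM v

end MatrixBounds

theorem rpow_le_mul_rpow_of_le_sqrt_mul_rpow {A B c t : ℝ} (hA : 0 ≤ A) (hB : 0 < B) (hc : 0 ≤ c)
    (ht : 0 < 1 + t) (h : B ≤ √(B * A) ^ (1 - t) * (c * (B * A)) ^ t) :
    B ^ ((1 - t) / 2) ≤ c ^ t * A ^ ((1 + t) / 2) := by
  have hsplit : √(B * A) ^ (1 - t) * (c * (B * A)) ^ t =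
      B ^ ((1 + t) / 2) * (c ^ t * A ^ ((1 + t) / 2)) := by
    have hexp : (1 + t) / 2 = 1 / 2 * (1 - t) + t := by ring
    rw [sqrt_eq_rpow, ← rpow_mul (by positivity), mul_rpow hc (by positivity),
      mul_rpow hB.le hA, mul_rpow hB.le hA, hexp, rpow_add hB,
      rpow_add' hA (by rw [← hexp]; positivity)]
    ring
  refine le_of_mul_le_mul_left ?_ (rpow_pos_of_pos hB ((1 + t) / 2))
  calc B ^ ((1 + t) / 2) * B ^ ((1 - t) / 2) = B := by
        rw [← rpow_add hB, show (1 + t) / 2 + (1 - t) / 2 = 1 by ring, rpow_one]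
    _ ≤ _ := h
    _ = _ := hsplit

theorem norm_le_one_of_sum_norm_sq_le_one {ι : Type*} [Fintype ι] {v : ι → ℂ}
    (hv : ∑ k, ‖v k‖ ^ 2 ≤ 1) (k : ι) : ‖v k‖ ≤ 1 :=
  (sq_le_one_iff₀ (norm_nonneg _)).mp
    ((single_le_sum (fun i _ => sq_nonneg ‖v i‖) (mem_univ k)).trans hv)

section Interpolation

variable {ι ι' : Type*} [Fintype ι] [Fintype ι'] {M : Matrix ι' ι ℂ} {c : ℝ}

theorem sum_norm_mulVec_rpow_le_three_lines (hM : ∀ j k, ‖M j k‖ ≤ c) (hc : 0 ≤ c)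
    (hcontr : ∀ v, ∑ j, ‖(M *ᵥ v) j‖ ^ 2 ≤ ∑ k, ‖v k‖ ^ 2)
    {x : ι → ℂ} (hx : ∑ k, ‖x k‖ ^ 2 = 1) {t : ℝ} (ht0 : 0 < t) (ht1 : t < 1) :
    let Sa := ∑ k, ‖x k‖ ^ (2 / (1 + t))
    let Sb := ∑ j, ‖(M *ᵥ x) j‖ ^ (2 / (1 - t))
    Sb ≤ √(Sb * Sa) ^ (1 - t) * (c * (Sb * Sa)) ^ t := by
  intro Sa Sb
  have hp : 0 < 1 + t := by linarith
  have hq : 0 < 1 - t := by linarith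
  have hx_le : ∀ k, ‖x k‖ ≤ 1 := norm_le_one_of_sum_norm_sq_le_one hx.le
  have hMx_le : ∀ j, ‖star (M *ᵥ x) j‖ ≤ 1 := fun j => by
    rw [Pi.star_apply, norm_star]
    exact norm_le_one_of_sum_norm_sq_le_one ((hcontr x).trans hx.le) j
  set F : ℂ → ℂ := fun z =>
    phasePowFamily (star (M *ᵥ x)) (1 - t) z ⬝ᵥ (M *ᵥ phasePowFamily x (1 + t) z)
  have hF_diff : Differentiable ℂ F := by
    simp only [F, dotProduct, Matrix.mulVec]
    fun_prop
  have hF_bdd : BddAbove ((norm ∘ F) '' Complex.HadamardThreeLines.verticalClosedStrip 0 1) := by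
    refine ⟨c * (Fintype.card ι' * Fintype.card ι), ?_⟩
    rintro _ ⟨z, hz, rfl⟩
    refine (norm_dotProduct_mulVec_le_of_norm_entry_le hM _ _).trans ?_
    gcongr
    exacts [sum_norm_phasePowFamily_le_card hMx_le hq hz.1,
      sum_norm_phasePowFamily_le_card hx_le hp hz.1]
  have hF_re_zero : ∀ z ∈ Complex.re ⁻¹' {0}, ‖F z‖ ≤ √(Sb * Sa) := fun z hz =>
    (norm_dotProduct_mulVec_le_sqrt hcontr _ _).trans_eq <| by
      rw [sum_norm_sq_phasePowFamily_of_re_eq_zero _ hq hz,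
        sum_norm_sq_phasePowFamily_of_re_eq_zero _ hp hz]
      simp only [Pi.star_apply, norm_star, Sa, Sb]
  have hF_re_one : ∀ z ∈ Complex.re ⁻¹' {1}, ‖F z‖ ≤ c * (Sb * Sa) := fun z hz =>
    (norm_dotProduct_mulVec_le_of_norm_entry_le hM _ _).trans_eq <| by
      rw [sum_norm_phasePowFamily_of_re_eq_one _ hq hz,
        sum_norm_phasePowFamily_of_re_eq_one _ hp hz]
      simp only [Pi.star_apply, norm_star, Sa, Sb]
  have hF_t : F t = Sb := by
    simp only [F, phasePowFamily_ofReal_self x hp.ne', dotProduct,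
      phasePowFamily_star_ofReal_mul_self _ (by linarith) ht1, Sb]
    push_cast
    rfl
  have hthree := Complex.HadamardThreeLines.norm_le_interp_of_mem_verticalClosedStrip₀₁' F
    (z := t) (by simp [Complex.HadamardThreeLines.verticalClosedStrip, ht0.le, ht1.le])
    hF_diff.diffContOnCl hF_bdd hF_re_zero hF_re_one
  rwa [hF_t, Complex.norm_real, norm_of_nonneg (sum_nonneg fun j _ => by positivity),
    Complex.ofReal_re] at hthree

theorem sum_norm_mulVec_rpow_le (hM : ∀ j k, ‖M j k‖ ≤ c) (hc : 0 ≤ c)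
    (hcontr : ∀ v, ∑ j, ‖(M *ᵥ v) j‖ ^ 2 ≤ ∑ k, ‖v k‖ ^ 2)
    {x : ι → ℂ} (hx : ∑ k, ‖x k‖ ^ 2 = 1) {t : ℝ} (ht0 : 0 < t) (ht1 : t < 1) :
    (∑ j, ‖(M *ᵥ x) j‖ ^ (2 / (1 - t))) ^ ((1 - t) / 2) ≤
      c ^ t * (∑ k, ‖x k‖ ^ (2 / (1 + t))) ^ ((1 + t) / 2) := by
  rcases (sum_nonneg fun j _ => by positivity :
    0 ≤ ∑ j, ‖(M *ᵥ x) j‖ ^ (2 / (1 - t))).eq_or_lt with hSb | hSb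
  · rw [← hSb, zero_rpow (by linarith)]
    positivity
  exact rpow_le_mul_rpow_of_le_sqrt_mul_rpow (sum_nonneg fun k _ => by positivity) hSb hc
    (by linarith) (sum_norm_mulVec_rpow_le_three_lines hM hc hcontr hx ht0 ht1)

end Interpolation

theorem HasDerivAt.nonneg_of_eventually_nonneg_right {f : ℝ → ℝ} {d a : ℝ}
    (hf : HasDerivAt f d a) (ha : f a = 0) (h : ∀ᶠ x in 𝓝[>] a, 0 ≤ f x) : 0 ≤ d := by
  refine ge_of_tendsto (hf.tendsto_slope.mono_left (nhdsGT_le_nhdsNE a)) ?_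
  filter_upwards [h, self_mem_nhdsWithin] with x hx hax
  rw [slope_def_field, ha, sub_zero]
  exact div_nonneg hx (sub_nonneg.mpr (le_of_lt hax))

theorem hasDerivAt_rpow_inv_at_one {P : ℝ} (hP : 0 ≤ P) :
    HasDerivAt (fun r : ℝ => P ^ r⁻¹) (-(P * log P)) 1 := by
  rcases hP.eq_or_lt with rfl | hP
  · refine (hasDerivAt_const (1 : ℝ) (0 : ℝ)).congr_of_eventuallyEq ?_ |>.congr_deriv (by simp)
    filter_upwards [eventually_ne_nhds one_ne_zero] with r hr
    simp [zero_rpow (inv_ne_zero hr)]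
  · exact ((hasDerivAt_inv one_ne_zero).const_rpow hP).congr_deriv (by simp [mul_comm])

section ProbabilityVector

variable {ι : Type*} [Fintype ι] {P : ι → ℝ}

theorem sum_rpow_pos (hP : ∀ k, 0 ≤ P k) (hP1 : ∑ k, P k = 1) (s : ℝ) :
    0 < ∑ k, P k ^ s := by
  obtain ⟨k, hk⟩ : ∃ k, P k ≠ 0 := by
    by_contra! h
    simp [h] at hP1
  exact sum_pos' (fun i _ => rpow_nonneg (hP i) s)
    ⟨k, mem_univ k, rpow_pos_of_pos ((hP k).lt_of_ne' hk) s⟩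

theorem hasDerivAt_mul_log_sum_rpow_inv (hP : ∀ k, 0 ≤ P k) (hP1 : ∑ k, P k = 1) :
    HasDerivAt (fun r : ℝ => r * log (∑ k, P k ^ r⁻¹)) (-∑ k, P k * log (P k)) 1 := by
  have hsum : HasDerivAt (fun r : ℝ => ∑ k, P k ^ r⁻¹) (∑ k, -(P k * log (P k))) 1 :=
    HasDerivAt.fun_sum fun k _ => hasDerivAt_rpow_inv_at_one (hP k)
  have hsum1 : ∑ k, P k ^ (1 : ℝ)⁻¹ = 1 := by simpa using hP1
  refine ((hasDerivAt_id' 1).mul (hsum.log (by rw [hsum1]; exact one_ne_zero))).congr_deriv ?_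
  simp [hP1]

end ProbabilityVector

theorem neg_two_mul_log_le_entropy_add_entropy {ι ι' : Type*} [Fintype ι] [Fintype ι']
    {P : ι → ℝ} {Q : ι' → ℝ} {c : ℝ} (hc : 0 < c)
    (hP : ∀ k, 0 ≤ P k) (hP1 : ∑ k, P k = 1) (hQ : ∀ j, 0 ≤ Q j) (hQ1 : ∑ j, Q j = 1)
    (h : ∀ t : ℝ, 0 < t → t < 1 → (∑ j, Q j ^ (1 - t)⁻¹) ^ ((1 - t) / 2) ≤
      c ^ t * (∑ k, P k ^ (1 + t)⁻¹) ^ ((1 + t) / 2)) :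
    -2 * log c ≤ (-∑ j, Q j * log (Q j)) + (-∑ k, P k * log (P k)) := by
  have hP_deriv := HasDerivAt.comp_const_add (1 : ℝ) 0
    (by simpa using hasDerivAt_mul_log_sum_rpow_inv hP hP1)
  have hQ_deriv := HasDerivAt.comp_const_sub (1 : ℝ) 0
    (by simpa using hasDerivAt_mul_log_sum_rpow_inv hQ hQ1)
  -- `D t` is the logarithm of the ratio of the two sides of `h t`: it vanishes at `0` and is
  -- nonnegative on `(0, 1)`, so `D' 0 = log c + (H(P) + H(Q)) / 2 ≥ 0` (`H` = Shannon entropy).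
  have hD := (((hasDerivAt_id' (0 : ℝ)).mul_const (log c)).fun_add (hP_deriv.div_const 2)).fun_sub
    (hQ_deriv.div_const 2)
  have hD_nonneg := hD.nonneg_of_eventually_nonneg_right (by simp [hP1, hQ1]) ?_
  · linarith
  filter_upwards [Ioo_mem_nhdsGT one_pos] with t ⟨ht0, ht1⟩
  have hA := sum_rpow_pos hP hP1 (1 + t)⁻¹
  have hB := sum_rpow_pos hQ hQ1 (1 - t)⁻¹
  have hlog := log_le_log (by positivity) (h t ht0 ht1)
  rw [log_mul (by positivity) (by positivity), log_rpow hc, log_rpow hA, log_rpow hB] at hlog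
  linarith

theorem neg_two_mul_log_le_entropy_mulVec_add_entropy {ι ι' : Type*} [Fintype ι] [Fintype ι']
    {M : Matrix ι' ι ℂ} {c : ℝ} (hM : ∀ j k, ‖M j k‖ ≤ c)
    (hcontr : ∀ v, ∑ j, ‖(M *ᵥ v) j‖ ^ 2 ≤ ∑ k, ‖v k‖ ^ 2)
    {x : ι → ℂ} (hx : ∑ k, ‖x k‖ ^ 2 = 1) (hMx : ∑ j, ‖(M *ᵥ x) j‖ ^ 2 = 1) :
    -2 * log c ≤ (-∑ j, ‖(M *ᵥ x) j‖ ^ 2 * log (‖(M *ᵥ x) j‖ ^ 2)) +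
      (-∑ k, ‖x k‖ ^ 2 * log (‖x k‖ ^ 2)) := by
  have hc : 0 < c := by
    obtain ⟨j, hj⟩ : ∃ j, (M *ᵥ x) j ≠ 0 := by
      by_contra! h
      simp [h] at hMx
    exact pos_of_mul_pos_left ((norm_pos_iff.mpr hj).trans_le (norm_mulVec_apply_le hM x j))
      (sum_nonneg fun k _ => norm_nonneg _)
  have hsq : ∀ (u : ℂ) (s : ℝ), (‖u‖ ^ 2) ^ s⁻¹ = ‖u‖ ^ (2 / s) := fun u s => by
    rw [← rpow_natCast, ← rpow_mul (norm_nonneg u), Nat.cast_ofNat, div_eq_mul_inv]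
  refine neg_two_mul_log_le_entropy_add_entropy hc (fun k => sq_nonneg _) hx
    (fun j => sq_nonneg _) hMx fun t ht0 ht1 => ?_
  simp_rw [hsq]
  exact sum_norm_mulVec_rpow_le hM hc.le hcontr hx ht0 ht1

section OrthonormalBasis

variable {H : Type*} [NormedAddCommGroup H] [InnerProductSpace ℂ H] {ι : Type*} [Fintype ι]
  (e : OrthonormalBasis ι ℂ H) (U : H →ₗᵢ[ℂ] H)

theorem mulVec_of_inner_apply (v : ι → ℂ) (j : ι) :
    (Matrix.of (fun j k => inner ℂ (e j) (U (e k))) *ᵥ v) j =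
      inner ℂ (e j) (U (∑ k, v k • e k)) := by
  simp [Matrix.mulVec, dotProduct, mul_comm]

theorem sum_norm_sq_mulVec_of_inner (v : ι → ℂ) :
    ∑ j, ‖(Matrix.of (fun j k => inner ℂ (e j) (U (e k))) *ᵥ v) j‖ ^ 2 = ∑ k, ‖v k‖ ^ 2 := by
  simp_rw [mulVec_of_inner_apply, e.sum_sq_norm_inner_right, U.norm_map,
    ← e.sum_sq_norm_inner_right (∑ k, v k • e k), e.orthonormal.inner_right_fintype]

end OrthonormalBasis

theorem maassen_uffink_entropic_uncertainty_general
    {H : Type*} [NormedAddCommGroup H] [InnerProductSpace ℂ H]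
    (N : ℕ) [NeZero N] (e : OrthonormalBasis (Fin N) ℂ H)
    (U : H ≃ₗᵢ[ℂ] H) (c : ℝ)
    (hc : c = Finset.univ.sup' Finset.univ_nonempty
      (fun jk : Fin N × Fin N => ‖inner ℂ (e jk.1) (U (e jk.2))‖))
    (ψ : H) (hψ : ‖ψ‖ = 1) :
    (-∑ k, ‖inner ℂ (e k) (U ψ)‖ ^ 2 *
        Real.log (‖inner ℂ (e k) (U ψ)‖ ^ 2))
      + (-∑ k, ‖inner ℂ (e k) ψ‖ ^ 2 *
        Real.log (‖inner ℂ (e k) ψ‖ ^ 2))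
      ≥ -2 * Real.log c := by
  set M := Matrix.of fun j k => inner ℂ (e j) (U.toLinearIsometry (e k))
  have hM : ∀ j k, ‖M j k‖ ≤ c := fun j k =>
    hc ▸ le_sup' (fun jk : Fin N × Fin N => ‖inner ℂ (e jk.1) (U (e jk.2))‖) (mem_univ (j, k))
  have hMψ : M *ᵥ (fun k => inner ℂ (e k) ψ) = fun j => inner ℂ (e j) (U ψ) :=
    funext fun j => by rw [mulVec_of_inner_apply, e.sum_repr']; rfl
  have hx : ∑ k, ‖inner ℂ (e k) ψ‖ ^ 2 = 1 := by rw [e.sum_sq_norm_inner_right, hψ, one_pow]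
  have hUx : ∑ j, ‖inner ℂ (e j) (U ψ)‖ ^ 2 = 1 := by
    rw [e.sum_sq_norm_inner_right, U.norm_map, hψ, one_pow]
  simpa only [hMψ] using neg_two_mul_log_le_entropy_mulVec_add_entropy hM
    (fun v => (sum_norm_sq_mulVec_of_inner e U.toLinearIsometry v).le) hx (hMψ ▸ hUx)

theorem maassen_uffink_entropic_uncertainty
    {H : Type*} [NormedAddCommGroup H] [InnerProductSpace ℂ H] [CompleteSpace H]
    (N : ℕ) [NeZero N] (e : OrthonormalBasis (Fin N) ℂ H)
    (U : H ≃ₗᵢ[ℂ] H) (c : ℝ)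
    (hc : c = Finset.univ.sup' Finset.univ_nonempty
      (fun jk : Fin N × Fin N => ‖inner ℂ (e jk.1) (U (e jk.2))‖))
    (ψ : H) (hψ : ‖ψ‖ = 1) :
    (-∑ k, ‖inner ℂ (e k) (U ψ)‖ ^ 2 *
        Real.log (‖inner ℂ (e k) (U ψ)‖ ^ 2))
      + (-∑ k, ‖inner ℂ (e k) ψ‖ ^ 2 *
        Real.log (‖inner ℂ (e k) ψ‖ ^ 2))
      ≥ -2 * Real.log c :=
  maassen_uffink_entropic_uncertainty_general N e U c hc ψ hψ
end
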